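/- arXiv:0912.5047 — 2 statements merged into one kernel-verified Lean document; each statement's English description precedes it below -/
import Mathlib

section
/- Let G be a group acting on a set M and let H be a finite subgroup of G which is the unique maximal stationary subgroup of the action up to conjugation. Assume moreover that M = ⋃_{g ∈ G} M^{gHg⁻¹}. Then every point x ∈ M lies in M^{gHg⁻¹} for exactly one conjugate gHg⁻¹ of H; that is, M is the disjoint union of the pairwise disjoint sets M^{gHg⁻¹}, one for each distinct conjugate of H. -/
/-- The fixed-point set `M^K` of a subgroup `K` acting on `M`. -/
def fixedPts {G : Type*} [Group G] (M : Type*) [MulAction G M] (K : Subgroup G) : Set M :=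
  {x : M | ∀ k ∈ K, k • x = x}

/-- The conjugate subgroup `gHg⁻¹`. -/
def conjSubgroup {G : Type*} [Group G] (g : G) (H : Subgroup G) : Subgroup G :=
  Subgroup.map (MulAut.conj g).toMonoidHom H

/-- `H` is the unique, up to conjugation, maximal stationary subgroup of the action of `G`
on `M`: `H` is finite and every subgroup with nonempty fixed-point set is contained in
some conjugate of `H`. -/
def UniqueMaxStationary {G : Type*} [Group G] (M : Type*) [MulAction G M]
    (H : Subgroup G) : Prop :=
  Finite H ∧ ∀ K : Subgroup G, (fixedPts M K).Nonempty → ∃ l : G, K ≤ conjSubgroup l H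

lemma card_conjSubgroup {G : Type*} [Group G] (g : G) (H : Subgroup G) :
    Nat.card (conjSubgroup g H) = Nat.card H :=
  (Nat.card_congr (H.equivMapOfInjective _ (MulAut.conj g).injective).toEquiv).symm

lemma conjSubgroup_finite {G : Type*} [Group G] (g : G) (H : Subgroup G) [Finite H] :
    Finite (conjSubgroup g H) :=
  Finite.of_equiv _ (H.equivMapOfInjective _ (MulAut.conj g).injective).toEquiv

lemma eq_of_le_conj {G : Type*} [Group G] {H : Subgroup G} (hfin : Finite H) (g m : G)
    (h : conjSubgroup g H ≤ conjSubgroup m H) : conjSubgroup g H = conjSubgroup m H := by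
  have hf : (conjSubgroup m H : Set G).Finite := by
    have := conjSubgroup_finite m H
    exact (conjSubgroup m H : Set G).toFinite
  apply SetLike.coe_injective
  refine Set.eq_of_subset_of_ncard_le h ?_ hf
  have h1 := card_conjSubgroup g H
  have h2 := card_conjSubgroup m H
  rw [← Nat.card_coe_set_eq, ← Nat.card_coe_set_eq]
  simp only [SetLike.coe_sort_coe]
  omega

lemma mem_fixedPts_iff_le_stabilizer {G M : Type*} [Group G] [MulAction G M]
    (K : Subgroup G) (x : M) : x ∈ fixedPts M K ↔ K ≤ MulAction.stabilizer G x := by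
  constructor
  · intro h k hk; exact h k hk
  · intro h k hk; exact h hk

/-- If `H` is the unique maximal stationary subgroup up to conjugation and
`M = ⋃_{g ∈ G} M^{gHg⁻¹}`, then every point of `M` lies in `M^{gHg⁻¹}` for exactly one
conjugate `gHg⁻¹` of `H`: `M` is the disjoint union of the sets `M^{gHg⁻¹}`. -/
theorem mem_unique_conj_fixedPts {G M : Type*} [Group G] [MulAction G M]
    (H : Subgroup G) (hH : UniqueMaxStationary M H)
    (hcover : (Set.univ : Set M) = ⋃ g : G, fixedPts M (conjSubgroup g H)) :
    ∀ x : M, ∃ g : G, x ∈ fixedPts M (conjSubgroup g H) ∧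
      ∀ l : G, x ∈ fixedPts M (conjSubgroup l H) → conjSubgroup l H = conjSubgroup g H := by
  intro x
  obtain ⟨hfin, hmax⟩ := hH
  have hx : x ∈ ⋃ g : G, fixedPts M (conjSubgroup g H) := by
    rw [← hcover]; trivial
  obtain ⟨s, ⟨g, rfl⟩, hg⟩ := hx
  refine ⟨g, hg, fun l hl => ?_⟩
  have hK : conjSubgroup g H ⊔ conjSubgroup l H ≤ MulAction.stabilizer G x :=
    sup_le ((mem_fixedPts_iff_le_stabilizer _ x).1 hg)
      ((mem_fixedPts_iff_le_stabilizer _ x).1 hl)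
  have hxK : x ∈ fixedPts M (conjSubgroup g H ⊔ conjSubgroup l H) :=
    (mem_fixedPts_iff_le_stabilizer _ x).2 hK
  obtain ⟨m, hm⟩ := hmax _ ⟨x, hxK⟩
  have h1 : conjSubgroup g H = conjSubgroup m H :=
    eq_of_le_conj hfin g m (le_sup_left.trans hm)
  have h2 : conjSubgroup l H = conjSubgroup m H :=
    eq_of_le_conj hfin l m (le_sup_right.trans hm)
  rw [h1, h2]
end

section
/- Let G be a group acting on a set M and let H be a finite subgroup of G which is the unique maximal stationary subgroup of the action up to conjugation. Then for every x ∈ M^H, the stabilizer of x in G is exactly H. -/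
/-- If `H` is the unique maximal stationary subgroup up to conjugation, then the
stabilizer of every point `x ∈ M^H` is exactly `H`. -/
theorem stabilizer_eq_of_mem_fixedPts {G M : Type*} [Group G] [MulAction G M]
    (H : Subgroup G) (hH : UniqueMaxStationary M H) :
    ∀ x ∈ fixedPts M H, MulAction.stabilizer G x = H := by
  obtain ⟨hfin, hmax⟩ := hH
  intro x hx
  have hHle : H ≤ MulAction.stabilizer G x := fun h hh => hx h hh
  obtain ⟨l, hl⟩ := hmax (MulAction.stabilizer G x) ⟨x, fun k hk => hk⟩
  -- H ≤ conjSubgroup l H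
  have hHle' : (H : Set G) ⊆ (conjSubgroup l H : Set G) := fun h hh => hl (hHle hh)
  have hset : (conjSubgroup l H : Set G) = (fun g => l * g * l⁻¹) '' (H : Set G) := by
    ext g
    simp [conjSubgroup, Subgroup.mem_map, Set.mem_image]
  have : Finite H := hfin
  have hfinset : (H : Set G).Finite := Set.toFinite _
  have hinj : Function.Injective (fun g : G => l * g * l⁻¹) := fun a b hab => by
    simpa using mul_left_cancel (mul_right_cancel hab)
  have hcard : ((conjSubgroup l H : Set G)).ncard = (H : Set G).ncard := by
    rw [hset, Set.ncard_image_of_injective _ hinj]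
  have heq : (H : Set G) = (conjSubgroup l H : Set G) :=
    Set.eq_of_subset_of_ncard_le hHle' hcard.le (hset ▸ hfinset.image _)
  apply le_antisymm _ hHle
  intro g hg
  have : g ∈ (conjSubgroup l H : Set G) := hl hg
  rwa [← heq] at this
end
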